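/- Every Klee-graph on at least 6 vertices contains a triangle, and any two distinct triangles in a Klee-graph other than K4 are vertex-disjoint. -/

import Mathlib

open SimpleGraph

def IsCubic {V : Type} (G : SimpleGraph V) : Prop :=
  ∀ v : V, (G.neighborSet v).ncard = 3

def Bridgeless {V : Type} (G : SimpleGraph V) : Prop :=
  ∀ e : Sym2 V, ¬ G.IsBridge e

def IsLonely {V : Type} (G : SimpleGraph V) (e : Sym2 V) : Prop :=
  ∃! M : G.Subgraph, M.IsPerfectMatching ∧ e ∈ M.edgeSet

noncomputable def lonelyCount {V : Type} (G : SimpleGraph V) : ℕ :=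
  {e : Sym2 V | IsLonely G e}.ncard

def IsVJoin {V : Type} {G : SimpleGraph V} (v : V) (J : G.Subgraph) : Prop :=
  J.IsSpanning ∧ (J.neighborSet v).ncard = 3 ∧ ∀ u : V, u ≠ v → (J.neighborSet u).ncard = 1

def IsThreeConnected {V : Type} [Fintype V] (G : SimpleGraph V) : Prop :=
  4 ≤ Fintype.card V ∧ ∀ S : Set V, S.ncard ≤ 2 → (G.induce (Sᶜ : Set V)).Connected

def cutConn {V₁ V₂ : Type} (G₁ : SimpleGraph V₁) (G₂ : SimpleGraph V₂)
    (x₁ y₁ : V₁) (x₂ y₂ : V₂) : SimpleGraph (V₁ ⊕ V₂) where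
  Adj u w :=
    match u, w with
    | Sum.inl a, Sum.inl b => G₁.Adj a b ∧ s(a, b) ≠ s(x₁, y₁)
    | Sum.inl a, Sum.inr b => (a = x₁ ∧ b = x₂) ∨ (a = y₁ ∧ b = y₂)
    | Sum.inr a, Sum.inl b => (b = x₁ ∧ a = x₂) ∨ (b = y₁ ∧ a = y₂)
    | Sum.inr a, Sum.inr b => G₂.Adj a b ∧ s(a, b) ≠ s(x₂, y₂)
  symm := ⟨by
    rintro (a | a) (b | b) h
    · exact ⟨h.1.symm, by rw [Sym2.eq_swap]; exact h.2⟩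
    · exact h
    · exact h
    · exact ⟨h.1.symm, by rw [Sym2.eq_swap]; exact h.2⟩⟩
  loopless := ⟨by
    rintro (a | a) h
    · exact G₁.loopless.irrefl a h.1
    · exact G₂.loopless.irrefl a h.1⟩

def ExpVert {V : Type} (G : SimpleGraph V) (v : V) : Type :=
  {u : V // u ≠ v} ⊕ {u : V // G.Adj v u}

def triangleExpansion {V : Type} (G : SimpleGraph V) (v : V) :
    SimpleGraph (ExpVert G v) where
  Adj u w :=
    match u, w with
    | Sum.inl a, Sum.inl b => G.Adj a.1 b.1
    | Sum.inl a, Sum.inr x => a.1 = x.1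
    | Sum.inr x, Sum.inl a => x.1 = a.1
    | Sum.inr x, Sum.inr y => x.1 ≠ y.1
  symm := ⟨by
    rintro (a | a) (b | b) h
    · exact G.adj_symm h
    · exact h.symm
    · exact h.symm
    · exact h.symm⟩
  loopless := ⟨by
    rintro (a | a) h
    · exact G.loopless.irrefl a.1 h
    · exact h rfl⟩

def mapEnd {V : Type} [DecidableEq V] (G : SimpleGraph V) (v : V) {a b : V}
    (h : G.Adj a b) : ExpVert G v :=
  if ha : a = v then Sum.inr ⟨b, by rwa [ha] at h⟩ else Sum.inl ⟨a, ha⟩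

inductive IsKlee : ∀ {V : Type}, SimpleGraph V → Prop
  | k4 {V : Type} {G : SimpleGraph V} (h : Nonempty (G ≃g completeGraph (Fin 4))) : IsKlee G
  | expand {V W : Type} {G : SimpleGraph V} (H : SimpleGraph W) (w : W)
      (hH : IsKlee H) (h : Nonempty (G ≃g triangleExpansion H w)) : IsKlee G

def CyclicFourEdgeConnected {V : Type} (G : SimpleGraph V) : Prop :=
  ∀ S : Set V, ¬ (G.induce S).IsAcyclic → ¬ (G.induce (Sᶜ : Set V)).IsAcyclic →
    4 ≤ {p : V × V | p.1 ∈ S ∧ p.2 ∉ S ∧ G.Adj p.1 p.2}.ncard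


def NbrsEq3 {V : Type} (G : SimpleGraph V) (v : V) : Prop :=
  ∃ p q r : V, p ≠ q ∧ p ≠ r ∧ q ≠ r ∧ G.Adj v p ∧ G.Adj v q ∧ G.Adj v r ∧
    ∀ u : V, G.Adj v u → u = p ∨ u = q ∨ u = r

lemma fin4_facts : ∀ i : Fin 4, i+1 ≠ i+2 ∧ i+1 ≠ i+3 ∧ i+2 ≠ i+3 ∧
    i ≠ i+1 ∧ i ≠ i+2 ∧ i ≠ i+3 ∧ ∀ u : Fin 4, u ≠ i → u = i+1 ∨ u = i+2 ∨ u = i+3 := by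
  decide

lemma top_adj' {α : Type} (a b : α) : (completeGraph α).Adj a b ↔ a ≠ b := Iff.rfl

lemma top_nbrs : ∀ i : Fin 4, NbrsEq3 (completeGraph (Fin 4)) i := by
  intro i
  obtain ⟨h1, h2, h3, h4, h5, h6, h7⟩ := fin4_facts i
  exact ⟨i+1, i+2, i+3, h1, h2, h3, (top_adj' ..).mpr h4, (top_adj' ..).mpr h5,
    (top_adj' ..).mpr h6, fun u hu => h7 u ((top_adj' ..).mp hu).symm⟩

lemma nbrs_transport {V W : Type} {G : SimpleGraph V} {G' : SimpleGraph W}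
    (e : G ≃g G') (v : V) (h : NbrsEq3 G' (e v)) : NbrsEq3 G v := by
  obtain ⟨p, q, r, hpq, hpr, hqr, hp, hq, hr, hcomp⟩ := h
  refine ⟨e.symm p, e.symm q, e.symm r,
    fun h => hpq (e.symm.injective h),
    fun h => hpr (e.symm.injective h),
    fun h => hqr (e.symm.injective h), ?_, ?_, ?_, ?_⟩
  · have := e.symm.map_adj_iff.mpr hp; rwa [e.symm_apply_apply] at this
  · have := e.symm.map_adj_iff.mpr hq; rwa [e.symm_apply_apply] at this
  · have := e.symm.map_adj_iff.mpr hr; rwa [e.symm_apply_apply] at this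
  · intro u hu
    have h2 : G'.Adj (e v) (e u) := e.map_adj_iff.mpr hu
    rcases hcomp (e u) h2 with h | h | h
    · left; rw [← h, e.symm_apply_apply]
    · right; left; rw [← h, e.symm_apply_apply]
    · right; right; rw [← h, e.symm_apply_apply]

lemma exp_nbrs {V : Type} (H : SimpleGraph V) (w : V) (ih : ∀ v, NbrsEq3 H v) :
    ∀ A : ExpVert H w, NbrsEq3 (triangleExpansion H w) A := by
  classical
  intro A
  cases A with
  | inl a =>
    obtain ⟨p, q, r, hpq, hpr, hqr, hp, hq, hr, hcomp⟩ := ih a.1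
    let f : ∀ u : V, H.Adj a.1 u → ExpVert H w := fun u hu =>
      if h : u = w then Sum.inr ⟨a.1, (h ▸ hu : H.Adj a.1 w).symm⟩ else Sum.inl ⟨u, h⟩
    have hadjf : ∀ u hu, (triangleExpansion H w).Adj (Sum.inl a) (f u hu) := by
      intro u hu
      by_cases h : u = w
      · rw [show f u hu = Sum.inr ⟨a.1, (h ▸ hu : H.Adj a.1 w).symm⟩ from dif_pos h]; exact rfl
      · rw [show f u hu = Sum.inl ⟨u, h⟩ from dif_neg h]; exact hu
    have hinjf : ∀ u hu u' hu', f u hu = f u' hu' → u = u' := by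
      intro u hu u' hu' h
      by_cases h1 : u = w <;> by_cases h2 : u' = w
      · exact h1.trans h2.symm
      · rw [show f u hu = Sum.inr ⟨a.1, (h1 ▸ hu : H.Adj a.1 w).symm⟩ from dif_pos h1, show f u' hu' = Sum.inl ⟨u', h2⟩ from dif_neg h2] at h; exact absurd h (by simp)
      · rw [show f u hu = Sum.inl ⟨u, h1⟩ from dif_neg h1, show f u' hu' = Sum.inr ⟨a.1, (h2 ▸ hu' : H.Adj a.1 w).symm⟩ from dif_pos h2] at h; exact absurd h (by simp)
      · rw [show f u hu = Sum.inl ⟨u, h1⟩ from dif_neg h1, show f u' hu' = Sum.inl ⟨u', h2⟩ from dif_neg h2] at h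
        injection h with h3
        exact congrArg Subtype.val h3
    have hcompf : ∀ X, (triangleExpansion H w).Adj (Sum.inl a) X →
        ∃ u, ∃ hu : H.Adj a.1 u, X = f u hu ∧ (u = p ∨ u = q ∨ u = r) := by
      intro X hX
      cases X with
      | inl b =>
        have hb : H.Adj a.1 b.1 := hX
        exact ⟨b.1, hb, (dif_neg b.2 : f b.1 hb = Sum.inl ⟨b.1, b.2⟩).symm, hcomp _ hb⟩
      | inr x =>
        have hax : a.1 = x.1 := hX
        have hw : H.Adj a.1 w := (hax ▸ x.2 : H.Adj w a.1).symm
        refine ⟨w, hw, ?_, hcomp _ hw⟩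
        rw [show f w hw = Sum.inr ⟨a.1, hw.symm⟩ from dif_pos rfl]
        exact congrArg Sum.inr (Subtype.ext hax.symm)
    refine ⟨f p hp, f q hq, f r hr,
      fun h => hpq (hinjf p hp q hq h), fun h => hpr (hinjf p hp r hr h),
      fun h => hqr (hinjf q hq r hr h), hadjf p hp, hadjf q hq, hadjf r hr, ?_⟩
    intro X hX
    obtain ⟨u, hu, rfl, hmem⟩ := hcompf X hX
    rcases hmem with rfl | rfl | rfl
    · left; rfl
    · right; left; rfl
    · right; right; rfl
  | inr x =>
    obtain ⟨p, q, r, hpq, hpr, hqr, hp, hq, hr, hcomp⟩ := ih w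
    obtain ⟨q', r', hq'1, hr'1, hq'r', hq', hr', hcomp'⟩ :
        ∃ q' r', q' ≠ x.1 ∧ r' ≠ x.1 ∧ q' ≠ r' ∧ H.Adj w q' ∧ H.Adj w r' ∧
          ∀ u, H.Adj w u → u = x.1 ∨ u = q' ∨ u = r' := by
      rcases hcomp x.1 x.2 with h | h | h
      · subst h; exact ⟨q, r, Ne.symm hpq, Ne.symm hpr, hqr, hq, hr, hcomp⟩
      · subst h
        refine ⟨p, r, hpq, Ne.symm hqr, hpr, hp, hr, fun u hu => ?_⟩
        rcases hcomp u hu with h | h | h <;> tauto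
      · subst h
        refine ⟨p, q, hpr, hqr, hpq, hp, hq, fun u hu => ?_⟩
        rcases hcomp u hu with h | h | h <;> tauto
    have hxw : x.1 ≠ w := x.2.ne'
    refine ⟨Sum.inl ⟨x.1, hxw⟩, Sum.inr ⟨q', hq'⟩, Sum.inr ⟨r', hr'⟩,
      fun h => Sum.inl_ne_inr h, fun h => Sum.inl_ne_inr h,
      ?_, rfl, Ne.symm hq'1, Ne.symm hr'1, ?_⟩
    · intro h
      injection h with h3
      exact hq'r' (congrArg Subtype.val h3)
    · intro X hX
      cases X with
      | inl b =>
        have hb : x.1 = b.1 := hX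
        left; exact congrArg Sum.inl (Subtype.ext hb.symm)
      | inr y =>
        have hne : x.1 ≠ y.1 := hX
        rcases hcomp' y.1 y.2 with h | h | h
        · exact absurd h (Ne.symm hne)
        · right; left; exact congrArg Sum.inr (Subtype.ext h)
        · right; right; exact congrArg Sum.inr (Subtype.ext h)

lemma klee_nbrs : ∀ {V : Type} {G : SimpleGraph V}, IsKlee G → ∀ v, NbrsEq3 G v := by
  intro V G h
  induction h with
  | k4 h =>
    obtain ⟨e⟩ := h
    intro v
    exact nbrs_transport e v (top_nbrs (e v))
  | expand H w hH hiso ih =>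
    obtain ⟨e⟩ := hiso
    intro v
    exact nbrs_transport e v (exp_nbrs H w ih (e v))

lemma set_eq_of_mems {α : Type} {a b c d e f : α}
    (h1 : a = d ∨ a = e ∨ a = f) (h2 : b = d ∨ b = e ∨ b = f) (h3 : c = d ∨ c = e ∨ c = f)
    (h4 : d = a ∨ d = b ∨ d = c) (h5 : e = a ∨ e = b ∨ e = c) (h6 : f = a ∨ f = b ∨ f = c) :
    ({a, b, c} : Set α) = {d, e, f} := by
  ext x
  simp only [Set.mem_insert_iff, Set.mem_singleton_iff]
  constructor
  · rintro (rfl | rfl | rfl) <;> tauto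
  · rintro (rfl | rfl | rfl) <;> tauto

lemma tri_class {V : Type} {H : SimpleGraph V} {w : V} {A B C : ExpVert H w}
    (hAB : (triangleExpansion H w).Adj A B) (hBC : (triangleExpansion H w).Adj B C)
    (hAC : (triangleExpansion H w).Adj A C) :
    (∃ a b c, A = Sum.inl a ∧ B = Sum.inl b ∧ C = Sum.inl c) ∨
    (∃ x y z, A = Sum.inr x ∧ B = Sum.inr y ∧ C = Sum.inr z) := by
  cases A with
  | inl a =>
    cases B with
    | inl b =>
      cases C with
      | inl c => exact Or.inl ⟨a, b, c, rfl, rfl, rfl⟩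
      | inr z =>
        have h1 : a.1 = z.1 := hAC
        have h2 : b.1 = z.1 := hBC
        have h3 : H.Adj a.1 b.1 := hAB
        rw [h1.trans h2.symm] at h3
        exact absurd h3 (H.loopless.irrefl b.1)
    | inr y =>
      cases C with
      | inl c =>
        have h1 : a.1 = y.1 := hAB
        have h2 : y.1 = c.1 := hBC
        have h3 : H.Adj a.1 c.1 := hAC
        rw [h1.trans h2] at h3
        exact absurd h3 (H.loopless.irrefl c.1)
      | inr z =>
        have h1 : a.1 = y.1 := hAB
        have h2 : a.1 = z.1 := hAC
        have h3 : y.1 ≠ z.1 := hBC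
        exact absurd (h1.symm.trans h2) h3
  | inr x =>
    cases B with
    | inl b =>
      cases C with
      | inl c =>
        have h1 : x.1 = b.1 := hAB
        have h2 : x.1 = c.1 := hAC
        have h3 : H.Adj b.1 c.1 := hBC
        rw [← h1.symm.trans h2] at h3
        exact absurd h3 (H.loopless.irrefl _)
      | inr z =>
        have h1 : x.1 = b.1 := hAB
        have h2 : b.1 = z.1 := hBC
        have h3 : x.1 ≠ z.1 := hAC
        exact absurd (h1.trans h2) h3
    | inr y =>
      cases C with
      | inl c =>
        have h1 : x.1 = c.1 := hAC
        have h2 : y.1 = c.1 := hBC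
        have h3 : x.1 ≠ y.1 := hAB
        exact absurd (h1.trans h2.symm) h3
      | inr z => exact Or.inr ⟨x, y, z, rfl, rfl, rfl⟩

lemma inr_all {V : Type} {H : SimpleGraph V} {w : V} (hw : NbrsEq3 H w)
    (x y z : {u : V // H.Adj w u}) (hxy : x.1 ≠ y.1) (hxz : x.1 ≠ z.1) (hyz : y.1 ≠ z.1) :
    ∀ u : {u : V // H.Adj w u}, u = x ∨ u = y ∨ u = z := by
  obtain ⟨p, q, r, hpq, hpr, hqr, _, _, _, hcomp⟩ := hw
  intro u
  have hx := hcomp x.1 x.2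
  have hy := hcomp y.1 y.2
  have hz := hcomp z.1 z.2
  have hu := hcomp u.1 u.2
  have hval : u.1 = x.1 ∨ u.1 = y.1 ∨ u.1 = z.1 := by
    rcases hx with hx | hx | hx <;> rcases hy with hy | hy | hy <;>
      rcases hz with hz | hz | hz <;> rcases hu with hu | hu | hu <;> simp_all
  rcases hval with h | h | h
  · exact Or.inl (Subtype.ext h)
  · exact Or.inr (Or.inl (Subtype.ext h))
  · exact Or.inr (Or.inr (Subtype.ext h))

lemma fin4_tri : ∀ g a b c d e f : Fin 4,
    (a ≠ b ∧ a ≠ c ∧ b ≠ c ∧ d ≠ e ∧ d ≠ f ∧ e ≠ f ∧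
     a ≠ g ∧ b ≠ g ∧ c ≠ g ∧ d ≠ g ∧ e ≠ g ∧ f ≠ g) →
    ((a = d ∨ a = e ∨ a = f) ∧ (b = d ∨ b = e ∨ b = f) ∧ (c = d ∨ c = e ∨ c = f) ∧
     (d = a ∨ d = b ∨ d = c) ∧ (e = a ∨ e = b ∨ e = c) ∧ (f = a ∨ f = b ∨ f = c)) := by
  set_option synthInstance.maxSize 2000 in
  set_option synthInstance.maxHeartbeats 1000000 in
  set_option maxHeartbeats 2000000 in
  decide

def TriDisj {V : Type} (G : SimpleGraph V) : Prop :=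
  ∀ a b c d e f : V, G.Adj a b → G.Adj b c → G.Adj a c →
    G.Adj d e → G.Adj e f → G.Adj d f →
    ({a, b, c} : Set V) ≠ {d, e, f} →
    Disjoint ({a, b, c} : Set V) ({d, e, f} : Set V)

lemma tridisj_transport {V W : Type} {G : SimpleGraph V} {G' : SimpleGraph W}
    (e : G ≃g G') (h' : TriDisj G') : TriDisj G := by
  intro a b c d f g hab hbc hac hdf hfg hdg hne
  have h1 : (⇑e) '' {a, b, c} = {e a, e b, e c} := by
    simp [Set.image_insert_eq]
  have h2 : (⇑e) '' {d, f, g} = {e d, e f, e g} := by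
    simp [Set.image_insert_eq]
  have hne' : ({e a, e b, e c} : Set W) ≠ {e d, e f, e g} := by
    intro hs
    exact hne (Set.image_injective.mpr e.injective (h1.trans (hs.trans h2.symm)))
  have hd := h' (e a) (e b) (e c) (e d) (e f) (e g)
    (e.map_adj_iff.mpr hab) (e.map_adj_iff.mpr hbc) (e.map_adj_iff.mpr hac)
    (e.map_adj_iff.mpr hdf) (e.map_adj_iff.mpr hfg) (e.map_adj_iff.mpr hdg) hne'
  rw [← h1, ← h2] at hd
  exact (Set.disjoint_image_iff e.injective).mp hd

lemma exp_disj {V : Type} (H : SimpleGraph V) (w : V) (hw : NbrsEq3 H w)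
    (hcase : Nonempty (H ≃g completeGraph (Fin 4)) ∨ TriDisj H) :
    TriDisj (triangleExpansion H w) := by
  intro A B C D E F hAB hBC hAC hDE hEF hDF hne
  rcases tri_class hAB hBC hAC with ⟨a, b, c, rfl, rfl, rfl⟩ | ⟨x, y, z, rfl, rfl, rfl⟩ <;>
    rcases tri_class hDE hEF hDF with ⟨d, e, f, rfl, rfl, rfl⟩ | ⟨x', y', z', rfl, rfl, rfl⟩
  · -- both inl
    have hab : H.Adj a.1 b.1 := hAB
    have hbc : H.Adj b.1 c.1 := hBC
    have hac : H.Adj a.1 c.1 := hAC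
    have hde : H.Adj d.1 e.1 := hDE
    have hef : H.Adj e.1 f.1 := hEF
    have hdf : H.Adj d.1 f.1 := hDF
    have hneV : ({a.1, b.1, c.1} : Set V) ≠ {d.1, e.1, f.1} := by
      intro h
      apply hne
      have m1 : a.1 = d.1 ∨ a.1 = e.1 ∨ a.1 = f.1 := by
        have : a.1 ∈ ({d.1, e.1, f.1} : Set V) := h ▸ (by simp)
        simpa using this
      have m2 : b.1 = d.1 ∨ b.1 = e.1 ∨ b.1 = f.1 := by
        have : b.1 ∈ ({d.1, e.1, f.1} : Set V) := h ▸ (by simp)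
        simpa using this
      have m3 : c.1 = d.1 ∨ c.1 = e.1 ∨ c.1 = f.1 := by
        have : c.1 ∈ ({d.1, e.1, f.1} : Set V) := h ▸ (by simp)
        simpa using this
      have m4 : d.1 = a.1 ∨ d.1 = b.1 ∨ d.1 = c.1 := by
        have : d.1 ∈ ({a.1, b.1, c.1} : Set V) := h ▸ (by simp)
        simpa using this
      have m5 : e.1 = a.1 ∨ e.1 = b.1 ∨ e.1 = c.1 := by
        have : e.1 ∈ ({a.1, b.1, c.1} : Set V) := h ▸ (by simp)
        simpa using this
      have m6 : f.1 = a.1 ∨ f.1 = b.1 ∨ f.1 = c.1 := by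
        have : f.1 ∈ ({a.1, b.1, c.1} : Set V) := h ▸ (by simp)
        simpa using this
      have lift : ∀ {u v : {u : V // u ≠ w}}, u.1 = v.1 →
          (Sum.inl u : ExpVert H w) = Sum.inl v :=
        fun h => congrArg Sum.inl (Subtype.ext h)
      exact set_eq_of_mems (m1.imp lift (fun h => h.imp lift lift))
        (m2.imp lift (fun h => h.imp lift lift)) (m3.imp lift (fun h => h.imp lift lift))
        (m4.imp lift (fun h => h.imp lift lift)) (m5.imp lift (fun h => h.imp lift lift))
        (m6.imp lift (fun h => h.imp lift lift))
    rcases hcase with hk4 | hTD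
    · -- H is K4: impossible to have two distinct triangles avoiding w
      exfalso
      obtain ⟨g⟩ := hk4
      apply hneV
      have key := fin4_tri (g w) (g a.1) (g b.1) (g c.1) (g d.1) (g e.1) (g f.1)
        ⟨(g.map_adj_iff.mpr hab : (completeGraph (Fin 4)).Adj _ _),
         (g.map_adj_iff.mpr hac : (completeGraph (Fin 4)).Adj _ _),
         (g.map_adj_iff.mpr hbc : (completeGraph (Fin 4)).Adj _ _),
         (g.map_adj_iff.mpr hde : (completeGraph (Fin 4)).Adj _ _),
         (g.map_adj_iff.mpr hdf : (completeGraph (Fin 4)).Adj _ _),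
         (g.map_adj_iff.mpr hef : (completeGraph (Fin 4)).Adj _ _),
         fun h => a.2 (g.injective h), fun h => b.2 (g.injective h),
         fun h => c.2 (g.injective h), fun h => d.2 (g.injective h),
         fun h => e.2 (g.injective h), fun h => f.2 (g.injective h)⟩
      obtain ⟨k1, k2, k3, k4, k5, k6⟩ := key
      have gi : ∀ {u v : V}, g u = g v → u = v := fun h => g.injective h
      exact set_eq_of_mems (k1.imp gi (fun h => h.imp gi gi)) (k2.imp gi (fun h => h.imp gi gi))
        (k3.imp gi (fun h => h.imp gi gi)) (k4.imp gi (fun h => h.imp gi gi))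
        (k5.imp gi (fun h => h.imp gi gi)) (k6.imp gi (fun h => h.imp gi gi))
    · have hdisj := hTD a.1 b.1 c.1 d.1 e.1 f.1 hab hbc hac hde hef hdf hneV
      rw [Set.disjoint_left]
      intro X hX hX'
      change X = _ ∨ X = _ ∨ X = _ at hX hX'
      have hv : Sum.elim Subtype.val Subtype.val X ∈ ({a.1, b.1, c.1} : Set V) := by
        rcases hX with rfl | rfl | rfl <;> simp
      have hv' : Sum.elim Subtype.val Subtype.val X ∈ ({d.1, e.1, f.1} : Set V) := by
        rcases hX' with rfl | rfl | rfl <;> simp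
      exact Set.disjoint_left.mp hdisj hv hv'
  · -- inl vs inr : disjoint
    rw [Set.disjoint_left]
    intro X hX hX'
    change X = _ ∨ X = _ ∨ X = _ at hX hX'
    rcases hX with rfl | rfl | rfl <;> rcases hX' with h | h | h <;> exact Sum.inl_ne_inr h
  · -- inr vs inl : disjoint
    rw [Set.disjoint_left]
    intro X hX hX'
    change X = _ ∨ X = _ ∨ X = _ at hX hX'
    rcases hX with rfl | rfl | rfl <;> rcases hX' with h | h | h <;> exact Sum.inr_ne_inl h
  · -- both inr : must be equal, contradiction
    exfalso
    apply hne
    have hall := inr_all hw x y z hAB hAC hBC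
    have hall' := inr_all hw x' y' z' hDE hDF hEF
    have lift : ∀ {u v1 v2 v3 : {u : V // H.Adj w u}}, (u = v1 ∨ u = v2 ∨ u = v3) →
        ((Sum.inr u : ExpVert H w) = Sum.inr v1 ∨ (Sum.inr u : ExpVert H w) = Sum.inr v2 ∨
         (Sum.inr u : ExpVert H w) = Sum.inr v3) := by
      rintro u v1 v2 v3 (rfl | rfl | rfl) <;> tauto
    exact set_eq_of_mems (lift (hall' x)) (lift (hall' y)) (lift (hall' z))
      (lift (hall x')) (lift (hall y')) (lift (hall z'))

lemma klee_disj : ∀ {V : Type} {G : SimpleGraph V}, IsKlee G →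
    ¬ Nonempty (G ≃g completeGraph (Fin 4)) → TriDisj G := by
  intro V G h
  induction h with
  | k4 h => exact fun hn => absurd h hn
  | expand H w hH hiso ih =>
    intro hn
    obtain ⟨e⟩ := hiso
    apply tridisj_transport e
    apply exp_disj H w (klee_nbrs hH w)
    by_cases hk : Nonempty (H ≃g completeGraph (Fin 4))
    · exact Or.inl hk
    · exact Or.inr (ih hk)

theorem stmt19 {V : Type} [Fintype V] (G : SimpleGraph V) (h : IsKlee G) :
    (6 ≤ Fintype.card V → ∃ a b c : V, G.Adj a b ∧ G.Adj b c ∧ G.Adj a c) ∧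
    (¬ Nonempty (G ≃g completeGraph (Fin 4)) →
      ∀ a b c d e f : V, G.Adj a b → G.Adj b c → G.Adj a c →
        G.Adj d e → G.Adj e f → G.Adj d f →
        ({a, b, c} : Set V) ≠ {d, e, f} →
        Disjoint ({a, b, c} : Set V) ({d, e, f} : Set V)) := by
  constructor
  · intro h6
    cases h with
    | k4 hk =>
      obtain ⟨e⟩ := hk
      have : Fintype.card V = 4 := by
        rw [Fintype.card_congr e.toEquiv]
        simp
      omega
    | expand H w hH hiso =>
      obtain ⟨e⟩ := hiso
      obtain ⟨p, q, r, hpq, hpr, hqr, hp, hq, hr, _⟩ := klee_nbrs hH w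
      refine ⟨e.symm (Sum.inr ⟨p, hp⟩), e.symm (Sum.inr ⟨q, hq⟩), e.symm (Sum.inr ⟨r, hr⟩),
        ?_, ?_, ?_⟩
      · exact e.symm.map_adj_iff.mpr (hpq : p ≠ q)
      · exact e.symm.map_adj_iff.mpr (hqr : q ≠ r)
      · exact e.symm.map_adj_iff.mpr (hpr : p ≠ r)
  · exact klee_disj h
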